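/- arXiv:2301.05504 — 2 statements merged into one kernel-verified Lean document; each statement's English description precedes it below -/
import Mathlib

section
/- Let A = X'VᵣΣᵣ⁻¹Uᵣ* and let Ã = Uᵣ* A Uᵣ = Uᵣ* X' Vᵣ Σᵣ⁻¹, where Uᵣ has orthonormal columns. If (λ, w) is an eigenpair of Ã with λ ≠ 0, then φ = X'VᵣΣᵣ⁻¹w satisfies Aφ = λφ and φ ≠ 0; i.e., every nonzero eigenvalue of Ã is an eigenvalue of A with exact DMD eigenvector φ. -/
open Matrix

/-- every nonzero eigenvalue `λ` of `Ã = Uᵣ* X' Vᵣ Σᵣ⁻¹` is an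
eigenvalue of `A = X' Vᵣ Σᵣ⁻¹ Uᵣ*`, with exact DMD eigenvector
`φ = X' Vᵣ Σᵣ⁻¹ w`. -/
theorem exact_dmd_modes (n m r : ℕ)
    (Ur : Matrix (Fin n) (Fin r) ℂ) (Vr : Matrix (Fin m) (Fin r) ℂ)
    (Sr : Matrix (Fin r) (Fin r) ℂ) (X' : Matrix (Fin n) (Fin m) ℂ)
    (hUr : Urᴴ * Ur = 1)
    (hSr : IsUnit Sr.det)
    (A : Matrix (Fin n) (Fin n) ℂ) (At : Matrix (Fin r) (Fin r) ℂ)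
    (hA : A = X' * Vr * Sr⁻¹ * Urᴴ)
    (hAt : At = Urᴴ * (X' * Vr * Sr⁻¹))
    (lam : ℂ) (w : Fin r → ℂ)
    (hw : w ≠ 0) (hlam : lam ≠ 0)
    (heig : At.mulVec w = lam • w)
    (φ : Fin n → ℂ) (hφ : φ = (X' * Vr * Sr⁻¹).mulVec w) :
    A.mulVec φ = lam • φ ∧ φ ≠ 0 := by
  have key : Urᴴ.mulVec φ = lam • w := by
    rw [hφ, mulVec_mulVec, ← hAt, heig]
  constructor
  · rw [hA, Matrix.mul_assoc, Matrix.mul_assoc, ← Matrix.mul_assoc Vr,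
      ← Matrix.mul_assoc X', ← Matrix.mul_assoc X', ← mulVec_mulVec, key,
      mulVec_smul, ← hφ]
  · intro h0
    have : lam • w = 0 := by rw [← key, h0, mulVec_zero]
    rcases smul_eq_zero.mp this with h | h
    · exact hlam h
    · exact hw h
end

section
/- Exact DMD reconstructs the data: if r ≥ rank(X), X = UᵣΣᵣVᵣ* is the rank-r truncated SVD (so it equals X exactly), and X, X' are linearly consistent (ker X ⊆ ker X'), then A = X'VᵣΣᵣ⁻¹Uᵣ* satisfies AX = X'. -/
open Matrix

/-- exact DMD reconstructs the data: if `X = Uᵣ Σᵣ Vᵣᵀ` exactly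
(compact SVD with `Σᵣ` invertible) and `ker X ⊆ ker X'`, then
`A = X' Vᵣ Σᵣ⁻¹ Uᵣᵀ` satisfies `A X = X'`. -/
theorem exact_dmd_reconstruction (n m r : ℕ)
    (X X' : Matrix (Fin n) (Fin (m - 1)) ℝ)
    (Ur : Matrix (Fin n) (Fin r) ℝ) (Vr : Matrix (Fin (m - 1)) (Fin r) ℝ)
    (Sr : Matrix (Fin r) (Fin r) ℝ)
    (hUr : Urᵀ * Ur = 1) (hVr : Vrᵀ * Vr = 1)
    (hSr : IsUnit Sr.det)
    (hX : X = Ur * Sr * Vrᵀ)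
    (hker : ∀ v : Fin (m - 1) → ℝ, X.mulVec v = 0 → X'.mulVec v = 0) :
    (X' * Vr * Sr⁻¹ * Urᵀ) * X = X' := by
  have hSinv : Sr⁻¹ * Sr = 1 := nonsing_inv_mul Sr hSr
  have hL : (X' * Vr * Sr⁻¹ * Urᵀ) * X = X' * (Vr * Vrᵀ) := by
    rw [hX]
    simp only [Matrix.mul_assoc, ← Matrix.mul_assoc Urᵀ Ur, hUr, Matrix.one_mul]
    rw [← Matrix.mul_assoc Sr⁻¹ Sr, hSinv, Matrix.one_mul]
  have hM : X * (Vr * Vrᵀ) = X := by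
    rw [hX]
    simp only [Matrix.mul_assoc, ← Matrix.mul_assoc Vrᵀ Vr, hVr, Matrix.one_mul]
  have key : ∀ v, (X' * (Vr * Vrᵀ)).mulVec v = X'.mulVec v := by
    intro v
    have h1 : X.mulVec (v - (Vr * Vrᵀ).mulVec v) = 0 := by
      rw [mulVec_sub, mulVec_mulVec, hM, sub_self]
    have h2 := hker _ h1
    rw [mulVec_sub, mulVec_mulVec, sub_eq_zero] at h2
    exact h2.symm
  have hproj : X' * (Vr * Vrᵀ) = X' := by
    ext i j
    have := congrFun (key (Pi.single j 1)) i
    simpa [mulVec_single] using this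
  rw [hL, hproj]
end
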